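/- arXiv:2604.08453 — 3 statements merged into one kernel-verified Lean document; each statement's English description precedes it below -/
import Mathlib

section
/- Let κ₁, κ₂ > 0 be real, let x₀ ∈ ℝ, and let θ_d, θ_n ∈ ℝ. Let N₁, N₂, W₁, W₂, W_d, W_n : ℝ → ℝ be differentiable at x₀ with W₁(x₀) = W₂(x₀) = 0, W₁'(x₀) = W₂'(x₀) = 0, W_d(x₀) = 1, W_d'(x₀) = 0, W_n(x₀) = 0, and W_n'(x₀) = 1. Define u_L := W₁·N₁ + θ_d·W_d + (θ_n/κ₁)·W_n and u_R := W₂·N₂ + θ_d·W_d + (θ_n/κ₂)·W_n. Then u_L(x₀) = u_R(x₀) = θ_d and κ₁·u_L'(x₀) = κ₂·u_R'(x₀) = θ_n; in particular the interface continuity condition u_L(x₀) − u_R(x₀) = 0 and the flux continuity condition κ₁·u_L'(x₀) − κ₂·u_R'(x₀) = 0 hold for every choice of N₁, N₂, θ_d, θ_n. -/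
/-! The windows are chosen so that at the interface only one term of the ansatz survives in each
of the value and the derivative: `W·N` vanishes to first order because `W` does (product rule),
`W_d` contributes the value `θ_d` and no slope, and `W_n` contributes the slope `θ_n / κ` and no
value. Multiplying the slope by `κ` gives the flux `θ_n` on either side, whatever `κ > 0` is. -/

variable {𝕜 : Type*} [NontriviallyNormedField 𝕜]

/-- In the paper's notation `a = θ_d` and `b = θ_n / κ`. -/
def windowAnsatz (W N Wd Wn : 𝕜 → 𝕜) (a b : 𝕜) : 𝕜 → 𝕜 :=
  fun x => W x * N x + a * Wd x + b * Wn x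

theorem HasDerivAt.mul_of_flat {W N : 𝕜 → 𝕜} {x n' : 𝕜}
    (hW : HasDerivAt W 0 x) (hW0 : W x = 0) (hN : HasDerivAt N n' x) :
    HasDerivAt (fun y => W y * N y) 0 x := by
  simpa [hW0] using hW.fun_mul hN

section Interface

variable {W N Wd Wn : 𝕜 → 𝕜} {x : 𝕜}

theorem windowAnsatz_apply_interface (a b : 𝕜)
    (hW0 : W x = 0) (hWd0 : Wd x = 1) (hWn0 : Wn x = 0) :
    windowAnsatz W N Wd Wn a b x = a := by
  simp [windowAnsatz, hW0, hWd0, hWn0]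

theorem hasDerivAt_windowAnsatz_interface (a b : 𝕜)
    (hW : HasDerivAt W 0 x) (hW0 : W x = 0) (hN : DifferentiableAt 𝕜 N x)
    (hWd : HasDerivAt Wd 0 x) (hWn : HasDerivAt Wn 1 x) :
    HasDerivAt (windowAnsatz W N Wd Wn a b) b x := by
  have h := ((hW.mul_of_flat hW0 hN.hasDerivAt).fun_add (hWd.const_mul a)).fun_add
    (hWn.const_mul b)
  rwa [mul_zero, mul_one, zero_add, zero_add] at h

theorem mul_deriv_windowAnsatz_interface {κ : 𝕜} (hκ : κ ≠ 0) (a c : 𝕜)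
    (hW : HasDerivAt W 0 x) (hW0 : W x = 0) (hN : DifferentiableAt 𝕜 N x)
    (hWd : HasDerivAt Wd 0 x) (hWn : HasDerivAt Wn 1 x) :
    κ * deriv (windowAnsatz W N Wd Wn a (c / κ)) x = c := by
  rw [(hasDerivAt_windowAnsatz_interface a (c / κ) hW hW0 hN hWd hWn).deriv, mul_div_cancel₀ c hκ]

end Interface

/-- Interface hard-constraint theorem of the windowing approach: the windowed ansatzes
on the two subdomains meeting at `x₀` attain the common value `θ_d` and common flux
`θ_n` at the interface, hence solution continuity and flux continuity hold for every
choice of `N₁, N₂, θ_d, θ_n`. -/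
theorem stmt7 (κ₁ κ₂ : ℝ) (hκ₁ : 0 < κ₁) (hκ₂ : 0 < κ₂) (x₀ θd θn : ℝ)
    (N₁ N₂ W₁ W₂ Wd Wn : ℝ → ℝ)
    (hN₁ : DifferentiableAt ℝ N₁ x₀) (hN₂ : DifferentiableAt ℝ N₂ x₀)
    (hW₁ : DifferentiableAt ℝ W₁ x₀) (hW₂ : DifferentiableAt ℝ W₂ x₀)
    (hWd : DifferentiableAt ℝ Wd x₀) (hWn : DifferentiableAt ℝ Wn x₀)
    (hW₁0 : W₁ x₀ = 0) (hW₂0 : W₂ x₀ = 0)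
    (hW₁' : deriv W₁ x₀ = 0) (hW₂' : deriv W₂ x₀ = 0)
    (hWd0 : Wd x₀ = 1) (hWd' : deriv Wd x₀ = 0)
    (hWn0 : Wn x₀ = 0) (hWn' : deriv Wn x₀ = 1)
    (uL uR : ℝ → ℝ)
    (huL : uL = fun x => W₁ x * N₁ x + θd * Wd x + (θn / κ₁) * Wn x)
    (huR : uR = fun x => W₂ x * N₂ x + θd * Wd x + (θn / κ₂) * Wn x) :
    (uL x₀ = θd ∧ uR x₀ = θd ∧ κ₁ * deriv uL x₀ = θn ∧ κ₂ * deriv uR x₀ = θn) ∧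
    uL x₀ - uR x₀ = 0 ∧ κ₁ * deriv uL x₀ - κ₂ * deriv uR x₀ = 0 := by
  change uL = windowAnsatz W₁ N₁ Wd Wn θd (θn / κ₁) at huL
  change uR = windowAnsatz W₂ N₂ Wd Wn θd (θn / κ₂) at huR
  subst huL huR
  have hW₁d : HasDerivAt W₁ 0 x₀ := hW₁' ▸ hW₁.hasDerivAt
  have hW₂d : HasDerivAt W₂ 0 x₀ := hW₂' ▸ hW₂.hasDerivAt
  have hWdd : HasDerivAt Wd 0 x₀ := hWd' ▸ hWd.hasDerivAt
  have hWnd : HasDerivAt Wn 1 x₀ := hWn' ▸ hWn.hasDerivAt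
  have hL0 := windowAnsatz_apply_interface (N := N₁) θd (θn / κ₁) hW₁0 hWd0 hWn0
  have hR0 := windowAnsatz_apply_interface (N := N₂) θd (θn / κ₂) hW₂0 hWd0 hWn0
  have hL' := mul_deriv_windowAnsatz_interface hκ₁.ne' θd θn hW₁d hW₁0 hN₁ hWdd hWnd
  have hR' := mul_deriv_windowAnsatz_interface hκ₂.ne' θd θn hW₂d hW₂0 hN₂ hWdd hWnd
  refine ⟨⟨hL0, hR0, hL', hR'⟩, ?_, ?_⟩
  · rw [hL0, hR0, sub_self]
  · rw [hL', hR', sub_self]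
end

section
/- Let κ₁, κ₂ > 0, let x₀ ∈ (0,1), let N₁, N₂ : ℝ → ℝ be differentiable, and let s, v ∈ ℝ. Then there exist real polynomials g₁, g₂ of degree at most 2 satisfying g₁'(0) = s − N₁'(0), g₁(x₀) = −(N₁(x₀) − N₂(x₀))/2, κ₁·g₁'(x₀) = −(κ₁·N₁'(x₀) − κ₂·N₂'(x₀))/2, g₂(1) = v − N₂(1), g₂(x₀) = (N₁(x₀) − N₂(x₀))/2, and κ₂·g₂'(x₀) = (κ₁·N₁'(x₀) − κ₂·N₂'(x₀))/2; and for any such g₁, g₂, the functions u₁ := N₁ + g₁ and u₂ := N₂ + g₂ satisfy u₁'(0) = s, u₂(1) = v, u₁(x₀) = u₂(x₀), and κ₁·u₁'(x₀) = κ₂·u₂'(x₀). -/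
/-!
Each buffer is a quadratic written in Taylor form around the interface point `x₀`: its value
and slope at `x₀` are prescribed directly, and the one remaining coefficient is solved for from
the boundary condition at `0` or `1`, which is possible because `x₀ ≠ 0` and `x₀ ≠ 1`.
The interface data of `g₁` and `g₂` are chosen as opposite halves of the mismatch of the networks,
so adding them to `N₁`, `N₂` cancels that mismatch exactly.
-/

open Polynomial

namespace Polynomial

section CommRing

variable {R : Type*} [CommRing R]

noncomputable def quadraticAt (b β γ δ : R) : R[X] :=
  C β + C γ * (X - C b) + C δ * (X - C b) ^ 2

theorem natDegree_quadraticAt_le (b β γ δ : R) : (quadraticAt b β γ δ).natDegree ≤ 2 := by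
  unfold quadraticAt
  compute_degree

theorem eval_quadraticAt (b β γ δ x : R) :
    (quadraticAt b β γ δ).eval x = β + γ * (x - b) + δ * (x - b) ^ 2 := by
  simp [quadraticAt]

theorem eval_derivative_quadraticAt (b β γ δ x : R) :
    (derivative (quadraticAt b β γ δ)).eval x = γ + 2 * δ * (x - b) := by
  simp [quadraticAt, derivative_pow]
  ring

end CommRing

section Field

variable {K : Type*} [Field K]

theorem exists_natDegree_le_two_derivative_eval_eval_derivative_eval [CharZero K] {a b : K}
    (hab : a ≠ b) (α β γ : K) : ∃ g : K[X], g.natDegree ≤ 2 ∧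
      (derivative g).eval a = α ∧ g.eval b = β ∧ (derivative g).eval b = γ := by
  have hab' : a - b ≠ 0 := sub_ne_zero.mpr hab
  refine ⟨quadraticAt b β γ ((α - γ) / (2 * (a - b))), natDegree_quadraticAt_le .., ?_, ?_, ?_⟩
  · rw [eval_derivative_quadraticAt]
    field_simp
    ring
  · simp [eval_quadraticAt]
  · simp [eval_derivative_quadraticAt]

theorem exists_natDegree_le_two_eval_eval_derivative_eval {a b : K} (hab : a ≠ b)
    (α β γ : K) : ∃ g : K[X], g.natDegree ≤ 2 ∧
      g.eval a = α ∧ g.eval b = β ∧ (derivative g).eval b = γ := by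
  have hab' : a - b ≠ 0 := sub_ne_zero.mpr hab
  refine ⟨quadraticAt b β γ ((α - β - γ * (a - b)) / (a - b) ^ 2),
    natDegree_quadraticAt_le .., ?_, ?_, ?_⟩
  · rw [eval_quadraticAt]
    field_simp
    ring
  · simp [eval_quadraticAt]
  · simp [eval_derivative_quadraticAt]

end Field

theorem deriv_add_eval {𝕜 : Type*} [NontriviallyNormedField 𝕜] {f : 𝕜 → 𝕜} {x : 𝕜}
    (hf : DifferentiableAt 𝕜 f x) (p : 𝕜[X]) :
    deriv (fun y => f y + p.eval y) x = deriv f x + (derivative p).eval x :=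
  (hf.hasDerivAt.add (p.hasDerivAt x)).deriv

end Polynomial

/-- Buffer approach for a one-dimensional single-interface problem: quadratic buffer
polynomials `g₁, g₂` matching the network mismatch data exist, and for any such buffers
the corrected functions `u₁ = N₁ + g₁`, `u₂ = N₂ + g₂` satisfy the Neumann condition at
`0`, the Dirichlet condition at `1`, and solution and flux continuity at `x₀`. -/
theorem stmt13 (κ₁ κ₂ : ℝ) (hκ₁ : 0 < κ₁) (hκ₂ : 0 < κ₂)
    (x₀ : ℝ) (hx₀ : x₀ ∈ Set.Ioo (0 : ℝ) 1)
    (N₁ N₂ : ℝ → ℝ) (hN₁ : Differentiable ℝ N₁) (hN₂ : Differentiable ℝ N₂)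
    (s v : ℝ) :
    (∃ g₁ g₂ : ℝ[X], g₁.natDegree ≤ 2 ∧ g₂.natDegree ≤ 2 ∧
      (derivative g₁).eval 0 = s - deriv N₁ 0 ∧
      g₁.eval x₀ = -(N₁ x₀ - N₂ x₀) / 2 ∧
      κ₁ * (derivative g₁).eval x₀ = -(κ₁ * deriv N₁ x₀ - κ₂ * deriv N₂ x₀) / 2 ∧
      g₂.eval 1 = v - N₂ 1 ∧
      g₂.eval x₀ = (N₁ x₀ - N₂ x₀) / 2 ∧
      κ₂ * (derivative g₂).eval x₀ = (κ₁ * deriv N₁ x₀ - κ₂ * deriv N₂ x₀) / 2) ∧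
    ∀ g₁ g₂ : ℝ[X], g₁.natDegree ≤ 2 → g₂.natDegree ≤ 2 →
      (derivative g₁).eval 0 = s - deriv N₁ 0 →
      g₁.eval x₀ = -(N₁ x₀ - N₂ x₀) / 2 →
      κ₁ * (derivative g₁).eval x₀ = -(κ₁ * deriv N₁ x₀ - κ₂ * deriv N₂ x₀) / 2 →
      g₂.eval 1 = v - N₂ 1 →
      g₂.eval x₀ = (N₁ x₀ - N₂ x₀) / 2 →
      κ₂ * (derivative g₂).eval x₀ = (κ₁ * deriv N₁ x₀ - κ₂ * deriv N₂ x₀) / 2 →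
      deriv (fun x => N₁ x + g₁.eval x) 0 = s ∧
      (fun x => N₂ x + g₂.eval x) 1 = v ∧
      (fun x => N₁ x + g₁.eval x) x₀ = (fun x => N₂ x + g₂.eval x) x₀ ∧
      κ₁ * deriv (fun x => N₁ x + g₁.eval x) x₀ =
        κ₂ * deriv (fun x => N₂ x + g₂.eval x) x₀ := by
  set jump := N₁ x₀ - N₂ x₀
  set fluxJump := κ₁ * deriv N₁ x₀ - κ₂ * deriv N₂ x₀
  refine ⟨?_, fun g₁ g₂ _ _ hg₁0 hg₁x₀ hg₁'x₀ hg₂1 hg₂x₀ hg₂'x₀ => ?_⟩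
  · obtain ⟨g₁, hg₁, hg₁0, hg₁x₀, hg₁'x₀⟩ :=
      exists_natDegree_le_two_derivative_eval_eval_derivative_eval hx₀.1.ne
        (s - deriv N₁ 0) (-jump / 2) (-fluxJump / 2 / κ₁)
    obtain ⟨g₂, hg₂, hg₂1, hg₂x₀, hg₂'x₀⟩ :=
      exists_natDegree_le_two_eval_eval_derivative_eval hx₀.2.ne'
        (v - N₂ 1) (jump / 2) (fluxJump / 2 / κ₂)
    exact ⟨g₁, g₂, hg₁, hg₂, hg₁0, hg₁x₀, by rw [hg₁'x₀, mul_div_cancel₀ _ hκ₁.ne'],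
      hg₂1, hg₂x₀, by rw [hg₂'x₀, mul_div_cancel₀ _ hκ₂.ne']⟩
  · refine ⟨?_, ?_, ?_, ?_⟩
    · rw [deriv_add_eval (hN₁ 0), hg₁0]
      ring
    · simp only [hg₂1]
      ring
    · simp only [hg₁x₀, hg₂x₀]
      ring
    · rw [deriv_add_eval (hN₁ x₀), deriv_add_eval (hN₂ x₀), mul_add, mul_add, hg₁'x₀, hg₂'x₀]
      ring
end

section
/- Let k₁, k₂, k₃, k₄ > 0. Set K = k₁k₂k₃ + k₁k₂k₄ + k₁k₃k₄ + k₂k₃k₄, C = (7/8)k₁k₂k₃ + (5/8)k₁k₂k₄ + (3/8)k₁k₃k₄ + (1/8)k₂k₃k₄, c₃ = −(3/16)k₁k₂k₃ − (1/8)k₁k₂k₄ − (1/16)k₁k₃k₄ + (3/16)k₂²k₃ + (1/8)k₂²k₄ + (1/16)k₂k₃k₄, c₅ = −(5/16)k₁k₂k₃ − (3/16)k₁k₂k₄ + (1/8)k₁k₃² + (3/16)k₂k₃² + (3/16)k₂k₃k₄, and c₇ = −(3/8)k₁k₂k₃ − (1/8)k₁k₂k₄ + (1/8)k₁k₃k₄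 + (3/8)k₂k₃k₄. Define u₁(x) = −x²/(2k₁) + C·x/(K·k₁), u₂(x) = −x²/(2k₂) + C·x/(K·k₂) + c₃/(K·k₂), u₃(x) = −x²/(2k₃) + C·x/(K·k₃) + c₅/(K·k₃), u₄(x) = −x²/(2k₄) + C·x/(K·k₄) + c₇/(K·k₄). Then: u₁(0) = 0; u₄(1) = 0; u₁(1/4) = u₂(1/4); u₂(1/2) = u₃(1/2); u₃(3/4) = u₄(3/4); k₁·u₁'(1/4) = k₂·u₂'(1/4); k₂·u₂'(1/2) = k₃·u₃'(1/2); k₃·u₃'(3/4) = k₄·u₄'(3/4); and −kₘ·uₘ''(x) = 1 for every x ∈ ℝ and m = 1,2,3,4. -/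
/-!
On each subdomain the candidate is `uₘ x = -x² / (2kₘ) + (C x + cₘ) / (K kₘ)`, so
`-kₘ uₘ'' = 1` and the flux `kₘ uₘ' x = C / K - x` does not depend on `m`: flux continuity
holds at every point. What remains — the boundary values and continuity at the interfaces — are
polynomial identities in `k₁, …, k₄` once the denominators are cleared.
-/

noncomputable def localSolution (k K C c : ℝ) (x : ℝ) : ℝ :=
  -x ^ 2 / (2 * k) + C * x / (K * k) + c / (K * k)

theorem hasDerivAt_localSolution (k K C c x : ℝ) :
    HasDerivAt (localSolution k K C c) (-x / k + C / (K * k)) x := by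
  have h := ((((hasDerivAt_pow 2 x).neg).div_const (2 * k)).add
    (((hasDerivAt_id' x).const_mul C).div_const (K * k))).add_const (c / (K * k))
  exact h.congr_deriv (by push_cast; ring)

theorem deriv_localSolution (k K C c : ℝ) :
    deriv (localSolution k K C c) = fun x => -x / k + C / (K * k) :=
  funext fun x => (hasDerivAt_localSolution k K C c x).deriv

theorem mul_deriv_localSolution {k : ℝ} (hk : k ≠ 0) (K C c x : ℝ) :
    k * deriv (localSolution k K C c) x = C / K - x := by
  rw [deriv_localSolution]
  field_simp
  ring

theorem neg_mul_deriv_deriv_localSolution {k : ℝ} (hk : k ≠ 0) (K C c x : ℝ) :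
    -k * deriv (deriv (localSolution k K C c)) x = 1 := by
  have h : HasDerivAt (fun x => -x / k + C / (K * k)) (-1 / k) x := by
    simpa using ((hasDerivAt_id x).neg.div_const k).add_const (C / (K * k))
  rw [deriv_localSolution, h.deriv]
  field_simp

/-- Verification of the explicit analytic solution of the three-interface model problem
`−(κu')' = 1` on `[0,1]` with interfaces at `1/4, 1/2, 3/4`: the piecewise quadratics
with the paper's coefficients satisfy the boundary conditions, solution continuity and
flux continuity at all three interfaces, and `−kₘ·uₘ'' = 1` everywhere. -/
theorem stmt16 (k₁ k₂ k₃ k₄ : ℝ) (hk₁ : 0 < k₁) (hk₂ : 0 < k₂) (hk₃ : 0 < k₃)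
    (hk₄ : 0 < k₄) (K C c₃ c₅ c₇ : ℝ)
    (hK : K = k₁ * k₂ * k₃ + k₁ * k₂ * k₄ + k₁ * k₃ * k₄ + k₂ * k₃ * k₄)
    (hC : C = (7 / 8) * k₁ * k₂ * k₃ + (5 / 8) * k₁ * k₂ * k₄
      + (3 / 8) * k₁ * k₃ * k₄ + (1 / 8) * k₂ * k₃ * k₄)
    (hc₃ : c₃ = -(3 / 16) * k₁ * k₂ * k₃ - (1 / 8) * k₁ * k₂ * k₄
      - (1 / 16) * k₁ * k₃ * k₄ + (3 / 16) * k₂ ^ 2 * k₃ + (1 / 8) * k₂ ^ 2 * k₄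
      + (1 / 16) * k₂ * k₃ * k₄)
    (hc₅ : c₅ = -(5 / 16) * k₁ * k₂ * k₃ - (3 / 16) * k₁ * k₂ * k₄
      + (1 / 8) * k₁ * k₃ ^ 2 + (3 / 16) * k₂ * k₃ ^ 2 + (3 / 16) * k₂ * k₃ * k₄)
    (hc₇ : c₇ = -(3 / 8) * k₁ * k₂ * k₃ - (1 / 8) * k₁ * k₂ * k₄
      + (1 / 8) * k₁ * k₃ * k₄ + (3 / 8) * k₂ * k₃ * k₄)
    (u₁ u₂ u₃ u₄ : ℝ → ℝ)
    (hu₁ : u₁ = fun x => -x ^ 2 / (2 * k₁) + C * x / (K * k₁))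
    (hu₂ : u₂ = fun x => -x ^ 2 / (2 * k₂) + C * x / (K * k₂) + c₃ / (K * k₂))
    (hu₃ : u₃ = fun x => -x ^ 2 / (2 * k₃) + C * x / (K * k₃) + c₅ / (K * k₃))
    (hu₄ : u₄ = fun x => -x ^ 2 / (2 * k₄) + C * x / (K * k₄) + c₇ / (K * k₄)) :
    u₁ 0 = 0 ∧ u₄ 1 = 0 ∧
    u₁ (1 / 4) = u₂ (1 / 4) ∧ u₂ (1 / 2) = u₃ (1 / 2) ∧ u₃ (3 / 4) = u₄ (3 / 4) ∧
    k₁ * deriv u₁ (1 / 4) = k₂ * deriv u₂ (1 / 4) ∧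
    k₂ * deriv u₂ (1 / 2) = k₃ * deriv u₃ (1 / 2) ∧
    k₃ * deriv u₃ (3 / 4) = k₄ * deriv u₄ (3 / 4) ∧
    (∀ x : ℝ, -k₁ * deriv (deriv u₁) x = 1) ∧
    (∀ x : ℝ, -k₂ * deriv (deriv u₂) x = 1) ∧
    (∀ x : ℝ, -k₃ * deriv (deriv u₃) x = 1) ∧
    (∀ x : ℝ, -k₄ * deriv (deriv u₄) x = 1) := by
  have hK₀ : K ≠ 0 := by rw [hK]; positivity
  replace hu₁ : u₁ = localSolution k₁ K C 0 := by
    rw [hu₁]; funext x; simp [localSolution]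
  subst hu₁ hu₂ hu₃ hu₄
  have flux {k k' : ℝ} (hk : 0 < k) (hk' : 0 < k') (c c' ξ : ℝ) :
      k * deriv (localSolution k K C c) ξ = k' * deriv (localSolution k' K C c') ξ := by
    rw [mul_deriv_localSolution hk.ne', mul_deriv_localSolution hk'.ne']
  have solves {k : ℝ} (hk : 0 < k) (c : ℝ) :=
    neg_mul_deriv_deriv_localSolution hk.ne' K C c
  refine ⟨by simp [localSolution], ?_, ?_, ?_, ?_,
    flux hk₁ hk₂ .., flux hk₂ hk₃ .., flux hk₃ hk₄ ..,
    solves hk₁ 0, solves hk₂ c₃, solves hk₃ c₅, solves hk₄ c₇⟩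
  all_goals
    simp only [localSolution]
    field_simp
    subst hK hC hc₃ hc₅ hc₇
    ring
end
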